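/- Let Ψ be a countable set, p : Ψ → ℝ the prior probability mass function with p(ψ) > 0 for all ψ and ∑_ψ p(ψ) = 1, and q : Ψ → ℝ the posterior probability mass function with q(ψ) ≥ 0 and ∑_ψ q(ψ) = 1. Suppose ψ* is the unique maximizer of the relative belief ratio q(ψ)/p(ψ). Then for every η with 0 < η ≤ p(ψ*), the element ψ* minimizes the posterior risk r_η(a) = ∑_{ψ ≠ a} q(ψ)/max(η, p(ψ)) over a ∈ Ψ; equivalently, ψ* maximizes a ↦ q(a)/max(η, p(a)). That is, for all sufficiently small η the value of the Bayes rule under the loss L_η(ψ, a) = 1{ψ ≠ a}/max(η, p(ψ)) is the least relative surprise estimate. -/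

import Mathlib

open scoped Classical

/-
Capping the prior from below at `η ≤ p ψ*` leaves the weight `q ψ* / p ψ*` unchanged and only
lowers every other weight `q a / max η (p a) ≤ q a / p a`, so `ψ*` still maximizes the capped
weights. The risk of `a` under `L_η` is the total capped weight minus the weight of `a`, hence
it is minimized exactly where the weight is maximized.
-/

theorem tsum_ite_ne_eq_tsum_sub {α G : Type*} [AddCommGroup G] [TopologicalSpace G]
    [IsTopologicalAddGroup G] [T2Space G] {f : α → G} (hf : Summable f) (a : α) :
    ∑' x, (if x ≠ a then f x else 0) = ∑' x, f x - f a := by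
  simp only [ne_eq, ite_not]
  exact (hasSum_ite_sub_hasSum hf.hasSum a).tsum_eq

theorem summable_div_max_of_summable {α : Type*} {p q : α → ℝ} (hq : ∀ x, 0 ≤ q x)
    (hqs : Summable q) {η : ℝ} (hη : 0 < η) : Summable fun x => q x / max η (p x) :=
  Summable.of_nonneg_of_le (fun x => div_nonneg (hq x) (hη.le.trans (le_max_left _ _)))
    (fun x => div_le_div_of_nonneg_left (hq x) hη (le_max_left _ _)) (hqs.div_const η)

theorem div_max_le_div_max_of_div_le {pa pb qa qb η : ℝ} (hpa : 0 < pa) (hqa : 0 ≤ qa)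
    (hηb : η ≤ pb) (h : qa / pa ≤ qb / pb) : qa / max η pa ≤ qb / max η pb :=
  calc qa / max η pa ≤ qa / pa := div_le_div_of_nonneg_left hqa hpa (le_max_right _ _)
    _ ≤ qb / pb := h
    _ = qb / max η pb := by rw [max_eq_right hηb]

theorem stmt_3_general {Ψ : Type*} (p q : Ψ → ℝ)
    (hp : ∀ ψ, 0 < p ψ)
    (hq : ∀ ψ, 0 ≤ q ψ) (hq1 : ∑' ψ, q ψ = 1)
    (r : ℝ → Ψ → ℝ)
    (hr : ∀ η a, r η a = ∑' ψ, (if ψ ≠ a then q ψ / max η (p ψ) else 0))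
    (ψstar : Ψ)
    (hstar : ∀ a, a ≠ ψstar → q a / p a < q ψstar / p ψstar) :
    ∀ η, 0 < η → η ≤ p ψstar →
      (∀ a, r η ψstar ≤ r η a) ∧
      (∀ a, q a / max η (p a) ≤ q ψstar / max η (p ψstar)) := by
  intro η hη hηp
  have hq_summable : Summable q := by
    by_contra h
    simp [tsum_eq_zero_of_not_summable h] at hq1
  have hmax (a : Ψ) : q a / max η (p a) ≤ q ψstar / max η (p ψstar) := by
    rcases eq_or_ne a ψstar with rfl | ha
    · exact le_rfl
    · exact div_max_le_div_max_of_div_le (hp a) (hq a) hηp (hstar a ha).le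
  refine ⟨fun a => ?_, hmax⟩
  have hsum := summable_div_max_of_summable (p := p) hq hq_summable hη
  rw [hr, hr, tsum_ite_ne_eq_tsum_sub hsum, tsum_ite_ne_eq_tsum_sub hsum]
  linarith [hmax a]

/-- For a countable `Ψ`, prior pmf `p > 0` and posterior pmf `q`,
if `ψ*` is the unique maximizer of the relative belief ratio `q ψ / p ψ`, then for
every `η` with `0 < η ≤ p ψ*`, `ψ*` minimizes the posterior risk
`r η a = ∑' ψ, 1{ψ ≠ a} q ψ / max(η, p ψ)`; equivalently, `ψ*` maximizes
`a ↦ q a / max(η, p a)`. -/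
theorem stmt_3 {Ψ : Type*} [Countable Ψ] (p q : Ψ → ℝ)
    (hp : ∀ ψ, 0 < p ψ) (hp1 : ∑' ψ, p ψ = 1)
    (hq : ∀ ψ, 0 ≤ q ψ) (hq1 : ∑' ψ, q ψ = 1)
    (r : ℝ → Ψ → ℝ)
    (hr : ∀ η a, r η a = ∑' ψ, (if ψ ≠ a then q ψ / max η (p ψ) else 0))
    (ψstar : Ψ)
    (hstar : ∀ a, a ≠ ψstar → q a / p a < q ψstar / p ψstar) :
    ∀ η, 0 < η → η ≤ p ψstar →
      (∀ a, r η ψstar ≤ r η a) ∧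
      (∀ a, q a / max η (p a) ≤ q ψstar / max η (p ψstar)) :=
  stmt_3_general p q hp hq hq1 r hr ψstar hstar
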